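/- Let n ≥ 5, x ∈ [0,1]^n, and let T ⊆ {1,…,n−1} satisfy T ∩ (T+1) = ∅ (indices cyclic modulo n−1). Let X_1, …, X_n ⊆ [0,1) be Lebesgue-measurable sets with μ(X_i) = x_i for all i. Then ∑_{i=1}^{n−1} ( μ(X_i ∩ X_{i+1}) + μ(X_i ∩ X_n) ) = φ(T) (index i+1 modulo n−1) holds if and only if the following three conditions are satisfied: (i) μ(X_i ∩ X_{i+1}) + μ(X_i ∩ X_n) + μ(X_{i+1} ∩ X_n) = max{0, x_i + x_{i+1} + x_n − 1} for every i ∈ T; (ii) μ(X_i ∩ X_{i+1}) = max{0, x_i + x_{i+1} − 1} for all i ∈ {1,…,n−1} ∖ T; (iii) μ(X_i ∩ X_n) = max{0, x_i + x_n − 1} for all i ∈ {1,…,n−1} ∖ (T ∪ (T+1)). -/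

import Mathlib

open Finset

/-- Cyclic successor on the rim `{1, …, n-1}` of the wheel `W_{n-1}`. -/
def wsucc (n i : ℕ) : ℕ := if i = n - 1 then 1 else i + 1

/-- The dual bound `φ(T)`. -/
noncomputable def phiW (n : ℕ) (x : ℕ → ℝ) (T : Finset ℕ) : ℝ :=
  ∑ i ∈ Finset.Icc 1 (n - 1) \ T, max 0 (x i + x (wsucc n i) - 1) +
  ∑ i ∈ Finset.Icc 1 (n - 1) \ (T ∪ T.image (wsucc n)), max 0 (x i + x n - 1) +
  ∑ i ∈ T, max 0 (x i + x (wsucc n i) + x n - 1)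

/-- `Φ* = max{φ(T) : T ⊆ {1,…,n-1}, T ∩ (T+1) = ∅}`. -/
noncomputable def phiStarW (n : ℕ) (x : ℕ → ℝ) : ℝ :=
  ((Finset.Icc 1 (n - 1)).powerset.filter
      (fun T => T ∩ T.image (wsucc n) = ∅)).sup'
    ⟨∅, by simp⟩ (phiW n x)

open MeasureTheory

/-!
Every term of `φ(T)` is a Fréchet-type lower bound for the matching part of the left-hand side:
`μ(A ∩ B) ≥ μA + μB - 1` for an edge, and `μ(A ∩ B) + μ(A ∩ C) + μ(B ∩ C) ≥ μA + μB + μC - 1`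
for the triangle `{i, i+1, n}` with `i ∈ T`. Since `T ∩ (T+1) = ∅`, the sum over the rim and spoke
edges splits exactly into these triangles, the rim edges outside `T` and the spokes outside
`T ∪ (T+1)`. A sum of termwise lower bounds is attained iff every term is.
-/

namespace MeasureTheory

section Probability

variable {α : Type*} [MeasurableSpace α] {μ : Measure α} [IsProbabilityMeasure μ]
  {A B C : Set α}

theorem measureReal_add_sub_one_le_inter (hB : MeasurableSet B) :
    μ.real A + μ.real B - 1 ≤ μ.real (A ∩ B) := by
  have := measureReal_union_add_inter (μ := μ) (s := A) hB
  have : μ.real (A ∪ B) ≤ 1 := measureReal_le_one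
  linarith

theorem measureReal_add_add_sub_one_le_inter_add_inter_add_inter (hB : MeasurableSet B)
    (hC : MeasurableSet C) :
    μ.real A + μ.real B + μ.real C - 1
      ≤ μ.real (A ∩ B) + μ.real (A ∩ C) + μ.real (B ∩ C) :=
  calc μ.real A + μ.real B + μ.real C - 1
      = μ.real (A ∪ B) + μ.real C - 1 + μ.real (A ∩ B) := by
        rw [← measureReal_union_add_inter hB]; ring
    _ ≤ μ.real ((A ∪ B) ∩ C) + μ.real (A ∩ B) := by
        gcongr; exact measureReal_add_sub_one_le_inter hC
    _ ≤ μ.real (A ∩ C) + μ.real (B ∩ C) + μ.real (A ∩ B) := by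
        gcongr; rw [Set.union_inter_distrib_right]; exact measureReal_union_le _ _
    _ = _ := by ring

end Probability

section UnitMassSet

variable {α : Type*} [MeasurableSpace α] {μ : Measure α} {U A B C : Set α}

theorem measureReal_restrict_of_subset (hA : A ⊆ U) : (μ.restrict U).real A = μ.real A := by
  simp only [Measure.real, Measure.restrict_eq_self μ hA]

theorem isProbabilityMeasure_restrict_of_measure_eq_one (hU : μ U = 1) :
    IsProbabilityMeasure (μ.restrict U) :=
  ⟨by rw [Measure.restrict_apply_univ, hU]⟩

theorem max_zero_add_sub_one_le_measureReal_inter (hU : μ U = 1) (hB : MeasurableSet B)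
    (hAU : A ⊆ U) (hBU : B ⊆ U) :
    max 0 (μ.real A + μ.real B - 1) ≤ μ.real (A ∩ B) := by
  have := isProbabilityMeasure_restrict_of_measure_eq_one hU
  have h := measureReal_add_sub_one_le_inter (μ := μ.restrict U) (A := A) hB
  rw [measureReal_restrict_of_subset hAU, measureReal_restrict_of_subset hBU,
    measureReal_restrict_of_subset (Set.inter_subset_left.trans hAU)] at h
  exact max_le measureReal_nonneg h

theorem max_zero_add_add_sub_one_le_measureReal_inter_add_inter_add_inter (hU : μ U = 1)
    (hB : MeasurableSet B) (hC : MeasurableSet C) (hAU : A ⊆ U) (hBU : B ⊆ U) (hCU : C ⊆ U) :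
    max 0 (μ.real A + μ.real B + μ.real C - 1)
      ≤ μ.real (A ∩ B) + μ.real (A ∩ C) + μ.real (B ∩ C) := by
  have := isProbabilityMeasure_restrict_of_measure_eq_one hU
  have h := measureReal_add_add_sub_one_le_inter_add_inter_add_inter
    (μ := μ.restrict U) (A := A) hB hC
  simp only [measureReal_restrict_of_subset, hAU, hBU, hCU,
    Set.inter_subset_left.trans hAU, Set.inter_subset_left.trans hBU] at h
  exact max_le (by positivity) h

end UnitMassSet

end MeasureTheory

theorem Finset.sum_add_eq_sum_sdiff_add_sum_sdiff_add_sum {ι M : Type*} [DecidableEq ι]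
    [AddCommMonoid M] {S T : Finset ι} {σ : ι → ι} (hT : T ⊆ S) (hσ : ∀ i ∈ T, σ i ∈ S)
    (hinj : Set.InjOn σ T) (hdisj : Disjoint T (T.image σ)) (f g : ι → M) :
    ∑ i ∈ S, (f i + g i)
      = ∑ i ∈ S \ T, f i + ∑ i ∈ S \ (T ∪ T.image σ), g i + ∑ i ∈ T, (f i + g i + g (σ i)) := by
  have hTσ : T ∪ T.image σ ⊆ S := union_subset hT (image_subset_iff.mpr hσ)
  rw [sum_add_distrib, ← sum_sdiff hT, ← sum_sdiff hTσ, sum_union hdisj, sum_image hinj,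
    sum_add_distrib, sum_add_distrib]
  abel

theorem wsucc_mem_Icc {n i : ℕ} (hi : i ∈ Icc 1 (n - 1)) : wsucc n i ∈ Icc 1 (n - 1) := by
  simp only [mem_Icc, wsucc] at *
  split <;> omega

theorem wsucc_injOn (n : ℕ) : Set.InjOn (wsucc n) (Icc 1 (n - 1)) := by
  intro i hi j hj h
  simp only [coe_Icc, Set.mem_Icc, wsucc] at hi hj h
  split_ifs at h <;> omega

theorem squeeze_Xi_general (n : ℕ) (x : ℕ → ℝ)
    (T : Finset ℕ) (hT : T ⊆ Finset.Icc 1 (n - 1))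
    (hdisj : T ∩ T.image (wsucc n) = ∅)
    (X : ℕ → Set ℝ)
    (hmeas : ∀ i ∈ Finset.Icc 1 n, MeasurableSet (X i))
    (hsub : ∀ i ∈ Finset.Icc 1 n, X i ⊆ Set.Ico 0 1)
    (hvol : ∀ i ∈ Finset.Icc 1 n, (volume (X i)).toReal = x i) :
    (∑ i ∈ Finset.Icc 1 (n - 1),
        ((volume (X i ∩ X (wsucc n i))).toReal + (volume (X i ∩ X n)).toReal)
      = phiW n x T)
    ↔
    ((∀ i ∈ T,
        (volume (X i ∩ X (wsucc n i))).toReal + (volume (X i ∩ X n)).toReal +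
          (volume (X (wsucc n i) ∩ X n)).toReal
          = max 0 (x i + x (wsucc n i) + x n - 1)) ∧
     (∀ i ∈ Finset.Icc 1 (n - 1) \ T,
        (volume (X i ∩ X (wsucc n i))).toReal = max 0 (x i + x (wsucc n i) - 1)) ∧
     (∀ i ∈ Finset.Icc 1 (n - 1) \ (T ∪ T.image (wsucc n)),
        (volume (X i ∩ X n)).toReal = max 0 (x i + x n - 1))) := by
  have hU : volume (Set.Ico (0 : ℝ) 1) = 1 := by simp
  have hrim : ∀ i ∈ Icc 1 (n - 1), i ∈ Icc 1 n ∧ wsucc n i ∈ Icc 1 n ∧ n ∈ Icc 1 n :=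
    fun i hi => by have := mem_Icc.mp (wsucc_mem_Icc hi); simp only [mem_Icc] at hi ⊢; omega
  have hedge : ∀ i ∈ Icc 1 n, ∀ j ∈ Icc 1 n,
      max 0 (x i + x j - 1) ≤ (volume (X i ∩ X j)).toReal := fun i hi j hj => by
    rw [← hvol i hi, ← hvol j hj]
    exact max_zero_add_sub_one_le_measureReal_inter hU (hmeas j hj) (hsub i hi) (hsub j hj)
  have hrimEdge : ∀ i ∈ Icc 1 (n - 1) \ T,
      max 0 (x i + x (wsucc n i) - 1) ≤ (volume (X i ∩ X (wsucc n i))).toReal := fun i hi =>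
    hedge _ (hrim i (mem_sdiff.mp hi).1).1 _ (hrim i (mem_sdiff.mp hi).1).2.1
  have hspoke : ∀ i ∈ Icc 1 (n - 1) \ (T ∪ T.image (wsucc n)),
      max 0 (x i + x n - 1) ≤ (volume (X i ∩ X n)).toReal := fun i hi =>
    hedge _ (hrim i (mem_sdiff.mp hi).1).1 _ (hrim i (mem_sdiff.mp hi).1).2.2
  have htriangle : ∀ i ∈ T, max 0 (x i + x (wsucc n i) + x n - 1)
      ≤ (volume (X i ∩ X (wsucc n i))).toReal + (volume (X i ∩ X n)).toReal +
          (volume (X (wsucc n i) ∩ X n)).toReal := fun i hi => by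
    obtain ⟨hi, hj, hk⟩ := hrim i (hT hi)
    rw [← hvol i hi, ← hvol _ hj, ← hvol n hk]
    exact max_zero_add_add_sub_one_le_measureReal_inter_add_inter_add_inter hU (hmeas _ hj)
      (hmeas n hk) (hsub i hi) (hsub _ hj) (hsub n hk)
  rw [sum_add_eq_sum_sdiff_add_sum_sdiff_add_sum (σ := wsucc n) hT
      (fun i hi => wsucc_mem_Icc (hT hi)) ((wsucc_injOn n).mono (by exact_mod_cast hT))
      (disjoint_iff_inter_eq_empty.mpr hdisj),
    phiW, eq_comm, add_eq_add_iff_eq_and_eq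
      (add_le_add (sum_le_sum hrimEdge) (sum_le_sum hspoke)) (sum_le_sum htriangle),
    add_eq_add_iff_eq_and_eq (sum_le_sum hrimEdge) (sum_le_sum hspoke),
    sum_eq_sum_iff_of_le hrimEdge, sum_eq_sum_iff_of_le hspoke, sum_eq_sum_iff_of_le htriangle]
  simp only [@eq_comm ℝ (max 0 _)]
  tauto

theorem squeeze_Xi (n : ℕ) (hn : 5 ≤ n) (x : ℕ → ℝ)
    (hx : ∀ i ∈ Finset.Icc 1 n, 0 ≤ x i ∧ x i ≤ 1)
    (T : Finset ℕ) (hT : T ⊆ Finset.Icc 1 (n - 1))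
    (hdisj : T ∩ T.image (wsucc n) = ∅)
    (X : ℕ → Set ℝ)
    (hmeas : ∀ i ∈ Finset.Icc 1 n, MeasurableSet (X i))
    (hsub : ∀ i ∈ Finset.Icc 1 n, X i ⊆ Set.Ico 0 1)
    (hvol : ∀ i ∈ Finset.Icc 1 n, (volume (X i)).toReal = x i) :
    (∑ i ∈ Finset.Icc 1 (n - 1),
        ((volume (X i ∩ X (wsucc n i))).toReal + (volume (X i ∩ X n)).toReal)
      = phiW n x T)
    ↔
    ((∀ i ∈ T,
        (volume (X i ∩ X (wsucc n i))).toReal + (volume (X i ∩ X n)).toReal +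
          (volume (X (wsucc n i) ∩ X n)).toReal
          = max 0 (x i + x (wsucc n i) + x n - 1)) ∧
     (∀ i ∈ Finset.Icc 1 (n - 1) \ T,
        (volume (X i ∩ X (wsucc n i))).toReal = max 0 (x i + x (wsucc n i) - 1)) ∧
     (∀ i ∈ Finset.Icc 1 (n - 1) \ (T ∪ T.image (wsucc n)),
        (volume (X i ∩ X n)).toReal = max 0 (x i + x n - 1))) :=
  squeeze_Xi_general n x T hT hdisj X hmeas hsub hvol
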